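/- arXiv:1710.07460 — 11 statements merged into one kernel-verified Lean document; each statement's English description precedes it below -/
import Mathlib

section
/- For integers 1 < p < k̄, the inequality 1/((p-1)·(p-1)!) > k̄/((k̄-1)·(k̄-1)!) + Σ_{h=1}^{k̄-1-p} 1/(k̄-h-1)! holds. -/
/-!
Write `m = p - 1` and `N = k - 1`. Reversing the summation index, the sum is `∑_{j=p}^{N-1} 1/j!`,
and `k / (N · N!) = 1/N! + 1/(N · N!)`, so the claim reads
`∑_{j=m+1}^{N} 1/j! + 1/(N · N!) < 1/(m · m!)`. This follows by telescoping the one-step estimate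
`1/(n+1)! + 1/((n+1)(n+1)!) < 1/(n · n!)`, which after clearing denominators is `n² + 2n < (n + 1)²`.
-/

open Finset Nat

lemma sum_Icc_one_sub_sub_one {M : Type*} [AddCommMonoid M] (f : ℕ → M) (a k : ℕ) :
    ∑ h ∈ Icc 1 (k - 1 - a), f (k - h - 1) = ∑ j ∈ Ico a (k - 1), f j := by
  refine sum_nbij' (fun h => k - h - 1) (fun j => k - j - 1) ?_ ?_ ?_ ?_ fun _ _ => rfl <;>
    intro x hx <;> simp only [mem_Icc, mem_Ico] at hx ⊢ <;> omega

lemma inv_factorial_succ_add_lt (n : ℕ) (hn : 0 < n) :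
    1 / ((n + 1)! : ℝ) + 1 / ((n + 1) * (n + 1)! : ℝ) < 1 / (n * n ! : ℝ) := by
  have hfact : (0 : ℝ) < n ! := by positivity
  have hn' : (0 : ℝ) < n := by exact_mod_cast hn
  rw [Nat.factorial_succ]
  push_cast
  rw [div_add_div _ _ (by positivity) (by positivity), div_lt_div_iff₀ (by positivity) (by positivity)]
  nlinarith [mul_pos hn' hfact, mul_pos (mul_pos hn' hfact) hfact]

lemma sum_Ico_inv_factorial_add_lt (m N : ℕ) (hm : 0 < m) (hmN : m < N) :
    ∑ j ∈ Ico (m + 1) (N + 1), 1 / (j ! : ℝ) + 1 / (N * N ! : ℝ) < 1 / (m * m ! : ℝ) := by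
  induction N, hmN using Nat.le_induction with
  | base =>
    simpa [Nat.Ico_succ_singleton] using inv_factorial_succ_add_lt m hm
  | succ N hmN ih =>
    rw [sum_Ico_succ_top (by omega)]
    have := inv_factorial_succ_add_lt N (by omega)
    push_cast at this ⊢
    linarith

theorem stmt_0 (p k : ℕ) (hp : 1 < p) (hpk : p < k) :
    (1 : ℝ) / (((p - 1) * Nat.factorial (p - 1) : ℕ) : ℝ) >
      (k : ℝ) / (((k - 1) * Nat.factorial (k - 1) : ℕ) : ℝ) +
        ∑ h ∈ Finset.Icc 1 (k - 1 - p), (1 : ℝ) / ((Nat.factorial (k - h - 1) : ℕ) : ℝ) := by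
  rw [sum_Icc_one_sub_sub_one (fun j => 1 / (j ! : ℝ))]
  obtain ⟨m, rfl⟩ : ∃ m, p = m + 1 := ⟨p - 1, by omega⟩
  obtain ⟨N, rfl⟩ : ∃ N, k = N + 1 := ⟨k - 1, by omega⟩
  have hN : (0 : ℝ) < N := by exact_mod_cast (show 0 < N by omega)
  have hsplit : ((N + 1 : ℕ) : ℝ) / (N * N ! : ℝ) = 1 / (N ! : ℝ) + 1 / (N * N ! : ℝ) := by
    field_simp
    push_cast
    ring
  have key := sum_Ico_inv_factorial_add_lt m N (by omega) (by omega)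
  rw [sum_Ico_succ_top (by omega)] at key
  simp only [Nat.add_sub_cancel, Nat.cast_mul] at hsplit ⊢
  linarith
end

section
/- For every integer k ≥ 2 and every j with 1 ≤ j ≤ k-1, the function f*_k(j) = (j-1)! · (1/((k-1)(k-1)!) + Σ_{i=j}^{k-1} 1/i!) / (1/((k-1)(k-1)!) + Σ_{i=1}^{k-1} 1/i!) satisfies f*_k(j+1) ≤ f*_k(j), i.e. f*_k is non-increasing on [1,k]. -/
/-! The tail `∑_{i > j} 1/i!` is at most `1/(j·j!)`, and this stays true with the tail
truncated at `n` and the correction term `1/(n·n!)` added: raising `n` by one does not increase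
the left side, because `n(n+2) ≤ (n+1)²`. The monotonicity step `f*_k(j+1) ≤ f*_k(j)` is exactly
`j!·t ≤ (j-1)!·(1/j! + t)` for this truncated tail `t`, which follows from `j!·t ≤ 1/j`. -/

/-- The optimal distribution rule `f*_k(j)` for covering games of cardinality `k`. -/
noncomputable def fstar (k j : ℕ) : ℝ :=
  (Nat.factorial (j - 1) : ℝ) *
    (1 / (((k - 1) * Nat.factorial (k - 1) : ℕ) : ℝ) +
      ∑ i ∈ Finset.Icc j (k - 1), (1 : ℝ) / (Nat.factorial i : ℝ)) /
  (1 / (((k - 1) * Nat.factorial (k - 1) : ℕ) : ℝ) +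
      ∑ i ∈ Finset.Icc 1 (k - 1), (1 : ℝ) / (Nat.factorial i : ℝ))

open Finset Nat

theorem one_div_succ_mul_factorial_succ_add_le {n : ℕ} (hn : 1 ≤ n) :
    1 / ((n + 1 : ℝ) * (n + 1)!) + 1 / ((n + 1)! : ℝ) ≤ 1 / (n * n ! : ℝ) := by
  have hn' : (1 : ℝ) ≤ n := by exact_mod_cast hn
  have hfact : (0 : ℝ) < n ! := by positivity
  rw [factorial_succ, cast_mul, div_add_div _ _ (by positivity) (by positivity),
    div_le_div_iff₀ (by positivity) (by positivity)]
  push_cast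
  nlinarith [mul_pos (mul_pos hfact hfact) (by linarith : (0 : ℝ) < n + 1)]

theorem one_div_mul_factorial_add_sum_Ioc_le {j n : ℕ} (hj : 1 ≤ j) (hjn : j ≤ n) :
    1 / (n * n ! : ℝ) + ∑ i ∈ Ioc j n, 1 / (i ! : ℝ) ≤ 1 / (j * j ! : ℝ) := by
  induction n, hjn using Nat.le_induction with
  | base => simp
  | succ n hjn ih =>
    rw [sum_Ioc_succ_top (by omega)]
    have hstep := one_div_succ_mul_factorial_succ_add_le (hj.trans hjn)
    push_cast at hstep ⊢
    linarith

theorem factorial_mul_le_factorial_pred_mul_add {j : ℕ} (hj : 1 ≤ j) {a : ℝ} (ha : 0 ≤ a)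
    (haj : a ≤ 1 / (j * j ! : ℝ)) : (j ! : ℝ) * a ≤ ((j - 1)! : ℝ) * (1 / j ! + a) := by
  have hj' : (0 : ℝ) < j := by exact_mod_cast hj
  have h_fact : (j ! : ℝ) * a ≤ 1 / j :=
    calc (j ! : ℝ) * a ≤ j ! * (1 / (j * j !)) := by gcongr
      _ = 1 / j := by field_simp
  have h_pred : ((j - 1)! : ℝ) * (1 / j !) = 1 / j := by
    rw [← Nat.mul_factorial_pred (by omega : j ≠ 0), cast_mul]
    field_simp
  rw [mul_add, h_pred]
  linarith [mul_nonneg (j - 1)!.cast_nonneg ha]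

theorem stmt_1_general (k : ℕ) (j : ℕ) (hj1 : 1 ≤ j) (hj2 : j ≤ k - 1) :
    fstar k (j + 1) ≤ fstar k j := by
  unfold fstar
  gcongr ?_ / _
  rw [Nat.add_sub_cancel, ← add_sum_Ioc_eq_sum_Icc hj2, Icc_add_one_left_eq_Ioc, add_left_comm]
  refine factorial_mul_le_factorial_pred_mul_add hj1 (by positivity) ?_
  exact_mod_cast one_div_mul_factorial_add_sum_Ioc_le hj1 hj2

theorem stmt_1 (k : ℕ) (hk : 2 ≤ k) (j : ℕ) (hj1 : 1 ≤ j) (hj2 : j ≤ k - 1) :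
    fstar k (j + 1) ≤ fstar k j :=
  stmt_1_general k j hj1 hj2
end

section
/- For every integer k ≥ 2 and every j with 1 ≤ j ≤ k, the distribution rule f*_k satisfies j · f*_k(j) ≤ 1. -/
open Finset Nat

noncomputable def fstarTail (n j : ℕ) : ℝ :=
  1 / ((n * n ! : ℕ) : ℝ) + ∑ i ∈ Icc j n, 1 / (i ! : ℝ)

theorem fstar_eq_fstarTail (k j : ℕ) :
    fstar k j = (j - 1)! * fstarTail (k - 1) j / fstarTail (k - 1) 1 := rfl

section

variable {n j : ℕ}

theorem fstarTail_nonneg (n j : ℕ) : 0 ≤ fstarTail n j := by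
  unfold fstarTail
  positivity

theorem fstarTail_self_add_one (n : ℕ) : fstarTail n (n + 1) = 1 / ((n * n ! : ℕ) : ℝ) := by
  simp [fstarTail]

theorem fstarTail_eq_add (h : j ≤ n) : fstarTail n j = 1 / (j ! : ℝ) + fstarTail n (j + 1) := by
  rw [fstarTail, fstarTail, ← insert_Icc_add_one_left_eq_Icc h, sum_insert (by simp)]
  ring

theorem one_div_factorial_eq (j : ℕ) :
    1 / (j ! : ℝ) = (j + 1) * (1 / ((j + 1)! : ℝ)) := by
  rw [factorial_succ]
  push_cast
  field_simp

theorem mul_fstarTail_add_one_le (h : j ≤ n) : j * fstarTail n (j + 1) ≤ 1 / (j ! : ℝ) := by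
  induction h using Nat.decreasingInduction with
  | self =>
    calc (n : ℝ) * fstarTail n (n + 1) = (n / n) * (1 / n !) := by
          rw [fstarTail_self_add_one]
          push_cast
          ring
      _ ≤ 1 / n ! := mul_le_of_le_one_left (by positivity) (div_self_le_one _)
  | of_succ j hj ih =>
    have hsucc : (j : ℝ) * fstarTail n (j + 2) ≤ (j + 1) * fstarTail n (j + 2) := by
      gcongr
      · exact fstarTail_nonneg n _
      · linarith
    push_cast at ih
    rw [fstarTail_eq_add hj, one_div_factorial_eq j]
    linarith

theorem factorial_mul_fstarTail_add_one_le (h : j ≤ n) :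
    ((j + 1)! : ℝ) * fstarTail n (j + 1) ≤ j ! * fstarTail n j := by
  calc ((j + 1)! : ℝ) * fstarTail n (j + 1)
      = j ! * fstarTail n (j + 1) + j ! * (j * fstarTail n (j + 1)) := by
        push_cast [factorial_succ]
        ring
    _ ≤ j ! * fstarTail n (j + 1) + j ! * (1 / j !) := by
        gcongr
        exact mul_fstarTail_add_one_le h
    _ = j ! * fstarTail n j := by
        rw [fstarTail_eq_add h]
        field_simp
        ring

theorem factorial_mul_fstarTail_le (h1 : 1 ≤ j) (h2 : j ≤ n + 1) :
    (j ! : ℝ) * fstarTail n j ≤ fstarTail n 1 := by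
  induction j, h1 using Nat.le_induction with
  | base => simp
  | succ j hj ih =>
    exact (factorial_mul_fstarTail_add_one_le (by omega)).trans (ih (by omega))

end

theorem stmt_3_general (k : ℕ) (j : ℕ) (hj1 : 1 ≤ j) (hj2 : j ≤ k) :
    (j : ℝ) * fstar k j ≤ 1 := by
  obtain ⟨m, rfl⟩ : ∃ m, j = m + 1 := ⟨j - 1, by omega⟩
  have hfac : ((m + 1 : ℕ) : ℝ) * m ! = (m + 1)! := by
    rw [factorial_succ]
    push_cast
    ring
  rw [fstar_eq_fstarTail, add_tsub_cancel_right, ← mul_div_assoc, ← mul_assoc, hfac]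
  exact div_le_one_of_le₀ (factorial_mul_fstarTail_le (by omega) (by omega)) (fstarTail_nonneg _ _)

theorem stmt_3 (k : ℕ) (hk : 2 ≤ k) (j : ℕ) (hj1 : 1 ≤ j) (hj2 : j ≤ k) :
    (j : ℝ) * fstar k j ≤ 1 :=
  stmt_3_general k j hj1 hj2
end

section
/- For every integer k ≥ 2 and every j with 1 ≤ j ≤ k-1, the distribution rule f*_k satisfies the recursion j·f*_k(j) - f*_k(j+1) = (k-1)·f*_k(k). -/
/-! Multiplying by `j` turns the prefactor `(j-1)!` into `j!`, which cancels the leading term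
`1/j!` of the tail sum; what remains is `f*_k(j+1)` plus `1/D`, with `D = fstarDenom k`
the common denominator. At `j = k` the tail sum is empty and `(k-1)(k-1)!` cancels the constant term,
giving `1/D` again. -/

open Finset Nat

noncomputable def fstarDenom (k : ℕ) : ℝ :=
  1 / (((k - 1) * (k - 1)! : ℕ) : ℝ) + ∑ i ∈ Icc 1 (k - 1), (1 : ℝ) / (i ! : ℝ)

lemma mul_fstar_sub_fstar_succ {k j : ℕ} (hj : 1 ≤ j) (hjk : j ≤ k - 1) :
    (j : ℝ) * fstar k j - fstar k (j + 1) = 1 / fstarDenom k := by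
  have hfact : (j : ℝ) * ((j - 1)! : ℝ) = (j ! : ℝ) := by
    exact_mod_cast mul_factorial_pred (by omega)
  have hj_ne : (j ! : ℝ) ≠ 0 := by positivity
  rw [fstar, fstar, ← fstarDenom, Nat.add_sub_cancel, ← add_sum_Ioc_eq_sum_Icc hjk,
    ← Icc_add_one_left_eq_Ioc, mul_div_assoc, ← mul_assoc, hfact]
  field_simp
  ring

lemma sub_one_mul_fstar_self {k : ℕ} (hk : 2 ≤ k) :
    ((k - 1 : ℕ) : ℝ) * fstar k k = 1 / fstarDenom k := by
  have hk1 : ((k - 1 : ℕ) : ℝ) ≠ 0 := by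
    have : 0 < k - 1 := by omega
    positivity
  rw [fstar, ← fstarDenom, Icc_eq_empty (by omega), sum_empty, add_zero]
  push_cast
  field_simp

theorem stmt_4_general (k : ℕ) (j : ℕ) (hj1 : 1 ≤ j) (hj2 : j ≤ k - 1) :
    (j : ℝ) * fstar k j - fstar k (j + 1) = ((k - 1 : ℕ) : ℝ) * fstar k k := by
  rw [mul_fstar_sub_fstar_succ hj1 hj2, sub_one_mul_fstar_self (by omega)]

theorem stmt_4 (k : ℕ) (hk : 2 ≤ k) (j : ℕ) (hj1 : 1 ≤ j) (hj2 : j ≤ k - 1) :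
    (j : ℝ) * fstar k j - fstar k (j + 1) = ((k - 1 : ℕ) : ℝ) * fstar k k :=
  stmt_4_general k j hj1 hj2
end

section
/- The function k ↦ PoA*(k) := 1 - 1/(1/((k-1)(k-1)!) + Σ_{i=1}^{k-1} 1/i!) is strictly decreasing in the integer k ≥ 2, i.e. PoA*(k+1) < PoA*(k) for all k ≥ 2. -/
/-! Passing from `k` to `k + 1` keeps the sum `∑ 1 / i!` up to `k - 1` and trades the tail
`1 / ((k - 1) (k - 1)!)` for `1 / (k k!) + 1 / k!`, which is smaller. So the denominator in
`poaStar` strictly decreases, and `poaStar` with it. -/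

/-- The optimal price of anarchy over covering games of cardinality `k`. -/
noncomputable def poaStar (k : ℕ) : ℝ :=
  1 - 1 / (1 / (((k - 1) * Nat.factorial (k - 1) : ℕ) : ℝ) +
      ∑ i ∈ Finset.Icc 1 (k - 1), (1 : ℝ) / (Nat.factorial i : ℝ))

noncomputable def poaStarDenom (m : ℕ) : ℝ :=
  1 / ((m * Nat.factorial m : ℕ) : ℝ) + ∑ i ∈ Finset.Icc 1 m, (1 : ℝ) / (Nat.factorial i : ℝ)

theorem poaStar_succ (m : ℕ) : poaStar (m + 1) = 1 - 1 / poaStarDenom m := rfl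

-- After clearing denominators this is `m (m + 2) < (m + 1) ^ 2`.
theorem one_div_mul_factorial_succ_add_one_div_factorial_succ_lt {m : ℕ} (hm : 0 < m) :
    1 / (((m + 1) * Nat.factorial (m + 1) : ℕ) : ℝ) + 1 / (Nat.factorial (m + 1) : ℝ)
      < 1 / ((m * Nat.factorial m : ℕ) : ℝ) := by
  have hf : (0 : ℝ) < Nat.factorial m := by exact_mod_cast Nat.factorial_pos m
  have hm' : (0 : ℝ) < m := by exact_mod_cast hm
  push_cast [Nat.factorial_succ]
  rw [div_add_div _ _ (by positivity) (by positivity),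
    div_lt_div_iff₀ (by positivity) (by positivity)]
  nlinarith [mul_pos (mul_pos hf hf) hm']

theorem poaStarDenom_succ_lt {m : ℕ} (hm : 0 < m) : poaStarDenom (m + 1) < poaStarDenom m := by
  have h := one_div_mul_factorial_succ_add_one_div_factorial_succ_lt hm
  unfold poaStarDenom
  rw [Finset.sum_Icc_succ_top (by omega)]
  linarith

theorem poaStarDenom_succ_pos (m : ℕ) : 0 < poaStarDenom (m + 1) := by
  unfold poaStarDenom
  have hsum : 0 < ∑ i ∈ Finset.Icc 1 (m + 1), (1 : ℝ) / (Nat.factorial i : ℝ) :=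
    Finset.sum_pos (fun i _ => by positivity) ⟨1, by simp⟩
  positivity

theorem stmt_5 (k : ℕ) (hk : 2 ≤ k) : poaStar (k + 1) < poaStar k := by
  obtain ⟨m, rfl⟩ : ∃ m, k = m + 1 := ⟨k - 1, by omega⟩
  rw [poaStar_succ, poaStar_succ]
  have hm : 0 < m := by omega
  have := one_div_lt_one_div_of_lt (poaStarDenom_succ_pos m) (poaStarDenom_succ_lt hm)
  linarith
end

section
/- The quantity χ*(k) := (k-1)(k-1)! / (1 + (k-1)(k-1)!·Σ_{i=1}^{k-1} 1/i!) is strictly increasing in the integer k ≥ 2. -/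
/-- The decay parameter `χ*(k) = χ(f*_k, k)` of the optimal distribution rule. -/
noncomputable def chiStar (k : ℕ) : ℝ :=
  (((k - 1) * Nat.factorial (k - 1) : ℕ) : ℝ) /
    (1 + (((k - 1) * Nat.factorial (k - 1) : ℕ) : ℝ) *
      ∑ i ∈ Finset.Icc 1 (k - 1), (1 : ℝ) / (Nat.factorial i : ℝ))

/-! Writing `χ*(n + 1) = 1 / (1 / (n · n!) + ∑_{i=1}^{n} 1/i!)`, the step from `n` to `n + 1` adds
`1/(n+1)!` to the sum but lowers the first term from `1/(n · n!)` to `1/((n+1) · (n+1)!)`; the loss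
exceeds the gain because `n (n + 2) < (n + 1)²`. -/

open Nat Finset

lemma chiStar_succ_eq_inv {n : ℕ} (hn : 0 < n) :
    chiStar (n + 1) = ((n * n ! : ℝ)⁻¹ + ∑ i ∈ Icc 1 n, (1 : ℝ) / i !)⁻¹ := by
  have hpos : (0 : ℝ) < n * n ! := by positivity
  simp only [chiStar, Nat.add_sub_cancel, Nat.cast_mul]
  field_simp

lemma inv_mul_factorial_succ_add_inv_factorial_succ_lt {n : ℕ} (hn : 0 < n) :
    (((n + 1 : ℕ) : ℝ) * (n + 1)!)⁻¹ + ((n + 1)! : ℝ)⁻¹ < (n * n ! : ℝ)⁻¹ := by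
  have hn' : (0 : ℝ) < n := by exact_mod_cast hn
  have hfac : (0 : ℝ) < n ! := by exact_mod_cast factorial_pos n
  rw [factorial_succ, Nat.cast_mul]
  push_cast
  rw [← sub_pos]
  field_simp
  nlinarith

theorem stmt_6 (k : ℕ) (hk : 2 ≤ k) : chiStar k < chiStar (k + 1) := by
  obtain ⟨n, hn, rfl⟩ : ∃ n, 0 < n ∧ k = n + 1 := ⟨k - 1, by omega, by omega⟩
  rw [chiStar_succ_eq_inv hn, chiStar_succ_eq_inv n.succ_pos,
    sum_Icc_succ_top (by omega : 1 ≤ n + 1)]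
  gcongr ?_⁻¹
  have := inv_mul_factorial_succ_add_inv_factorial_succ_lt hn
  rw [one_div]
  linarith
end

section
/- For integers 1 < p < k̄, χ(f*_{k̄}, k̄) < χ(f'_p, k̄), where χ(f*_{k̄}, k̄) = (k̄-1)(k̄-1)! / (1 + (k̄-1)(k̄-1)!·Σ_{i=1}^{k̄-1} 1/i!) and χ(f'_p, k̄) = ((k̄-1)(k̄-1)! / (k̄ + (k̄-1)·Σ_{h=1}^{k̄-1-p} (k̄-1)!/(k̄-h-1)!)) · f*_p(p)/(p-1)!. -/
/-- `χ(f'_p, k̄)` in closed form. -/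
noncomputable def chiRisky (p k : ℕ) : ℝ :=
  ((((k - 1) * Nat.factorial (k - 1) : ℕ) : ℝ) /
      ((k : ℝ) + ((k - 1 : ℕ) : ℝ) *
        ∑ h ∈ Finset.Icc 1 (k - 1 - p),
          (Nat.factorial (k - 1) : ℝ) / (Nat.factorial (k - h - 1) : ℝ))) *
    (fstar p p / (Nat.factorial (p - 1) : ℝ))

open Finset

lemma one_div_factorial_succ_lt_sub {j : ℕ} (hj : 0 < j) :
    (1 : ℝ) / (j + 1).factorial <
      1 / ((j * j.factorial : ℕ) : ℝ) - 1 / (((j + 1) * (j + 1).factorial : ℕ) : ℝ) := by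
  have hj' : (0 : ℝ) < j := by exact_mod_cast hj
  have hf : (0 : ℝ) < j.factorial := by exact_mod_cast j.factorial_pos
  push_cast [Nat.factorial_succ]
  rw [div_sub_div _ _ (by positivity) (by positivity), div_lt_div_iff₀ (by positivity) (by positivity)]
  -- cleared of denominators this is `j (j + 1) < (j + 1)² - j`
  nlinarith [mul_pos (mul_pos hf hf) hj', mul_pos hf hf]

lemma sum_Icc_one_div_factorial_lt {m n : ℕ} (hm : 0 < m) (hmn : m < n) :
    ∑ i ∈ Icc (m + 1) n, (1 : ℝ) / i.factorial <
      1 / ((m * m.factorial : ℕ) : ℝ) - 1 / ((n * n.factorial : ℕ) : ℝ) := by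
  induction n, hmn using Nat.le_induction with
  | base => simpa using one_div_factorial_succ_lt_sub hm
  | succ n hmn ih =>
    rw [sum_Icc_succ_top (by omega)]
    linarith [one_div_factorial_succ_lt_sub (j := n) (by omega)]

lemma sum_Icc_one_sub_reflect {M : Type*} [AddCommMonoid M] (f : ℕ → M) {p : ℕ} (hp : 0 < p)
    (N : ℕ) : ∑ h ∈ Icc 1 (N - p), f (N - h) = ∑ j ∈ Icc p (N - 1), f j := by
  apply sum_nbij' (N - ·) (N - ·) <;> intro a ha <;> simp only [mem_Icc] at ha ⊢ <;> omega

lemma add_mul_sum_factorial_div {p n : ℕ} (hpn : p ≤ n + 1) :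
    ((n + 2 : ℕ) : ℝ) + (n + 1 : ℕ) * ∑ j ∈ Icc p n, ((n + 1).factorial : ℝ) / j.factorial =
      1 + ((n + 1) * (n + 1).factorial : ℕ) * ∑ j ∈ Icc p (n + 1), (1 : ℝ) / j.factorial := by
  have hf : ((n + 1).factorial : ℝ) ≠ 0 := by positivity
  rw [sum_Icc_succ_top hpn, mul_add, mul_sum, mul_sum]
  push_cast
  field_simp
  ring

lemma fstar_self_div_factorial {p : ℕ} (hp : 1 < p) :
    fstar p p / (p - 1).factorial =
      1 / (1 + ((p - 1) * (p - 1).factorial : ℕ) * ∑ i ∈ Icc 1 (p - 1), (1 : ℝ) / i.factorial) := by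
  have hM : (((p - 1) * (p - 1).factorial : ℕ) : ℝ) ≠ 0 := by
    have : 0 < p - 1 := by omega
    positivity
  have hf : ((p - 1).factorial : ℝ) ≠ 0 := by positivity
  rw [fstar, Icc_eq_empty (by omega), sum_empty, add_zero]
  field_simp

lemma chiRisky_eq {p k : ℕ} (hp : 1 < p) (hpk : p < k) :
    chiRisky p k =
      (((k - 1) * (k - 1).factorial : ℕ) : ℝ) /
        ((1 + ((k - 1) * (k - 1).factorial : ℕ) * ∑ i ∈ Icc p (k - 1), (1 : ℝ) / i.factorial) *
          (1 + ((p - 1) * (p - 1).factorial : ℕ) * ∑ i ∈ Icc 1 (p - 1), (1 : ℝ) / i.factorial)) := by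
  obtain ⟨n, rfl⟩ : ∃ n, k = n + 2 := ⟨k - 2, by omega⟩
  have hreflect := sum_Icc_one_sub_reflect (fun j ↦ ((n + 1).factorial : ℝ) / j.factorial)
    (by omega : 0 < p) (n + 1)
  simp only [Nat.add_one_sub_one] at hreflect
  have hk : n + 2 - 1 = n + 1 := rfl
  rw [chiRisky, fstar_self_div_factorial hp, div_mul_div_comm, mul_one]
  simp only [hk, Nat.sub_right_comm (n + 2) _ 1, hreflect,
    add_mul_sum_factorial_div (by omega : p ≤ n + 1)]

lemma sum_Icc_one_eq_add {M : Type*} [AddCommMonoid M] (f : ℕ → M) {p k : ℕ} (hp : 0 < p)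
    (hpk : p ≤ k) :
    ∑ i ∈ Icc 1 (k - 1), f i = ∑ i ∈ Icc 1 (p - 1), f i + ∑ i ∈ Icc p (k - 1), f i := by
  have hk : 0 < k := hp.trans_le hpk
  rw [Icc_sub_one_right_eq_Ico_of_not_isMin (by simpa using hk.ne'),
    Icc_sub_one_right_eq_Ico_of_not_isMin (by simpa using hp.ne'),
    Icc_sub_one_right_eq_Ico_of_not_isMin (by simpa using hk.ne')]
  exact (sum_Ico_consecutive f hp hpk).symm

lemma one_add_mul_mul_one_add_lt {M m s t : ℝ} (ht : 0 < t) (h : m * (1 + M * s) < M) :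
    (1 + M * s) * (1 + m * t) < 1 + M * (t + s) := by
  nlinarith [mul_lt_mul_of_pos_left h ht]

theorem stmt_7 (p k : ℕ) (hp : 1 < p) (hpk : p < k) :
    chiStar k < chiRisky p k := by
  set M : ℝ := (((k - 1) * (k - 1).factorial : ℕ) : ℝ)
  set m : ℝ := (((p - 1) * (p - 1).factorial : ℕ) : ℝ)
  set S := ∑ i ∈ Icc 1 (p - 1), (1 : ℝ) / i.factorial
  set σ := ∑ i ∈ Icc p (k - 1), (1 : ℝ) / i.factorial
  have hM : 0 < M := by
    have : 0 < k - 1 := by omega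
    positivity
  have hm : 0 < m := by
    have : 0 < p - 1 := by omega
    positivity
  have hS : 0 < S := sum_pos (fun i _ ↦ by positivity) ⟨1, mem_Icc.2 ⟨le_rfl, by omega⟩⟩
  have hσ : σ < 1 / m - 1 / M := by
    have := sum_Icc_one_div_factorial_lt (m := p - 1) (n := k - 1) (by omega) (by omega)
    rwa [Nat.sub_add_cancel hp.le] at this
  have hkey : m * (1 + M * σ) < M :=
    calc m * (1 + M * σ) < m * (1 + M * (1 / m - 1 / M)) := by gcongr
      _ = M := by field_simp; ring
  rw [chiStar, sum_Icc_one_eq_add _ (by omega) hpk.le, chiRisky_eq hp hpk]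
  exact div_lt_div_of_pos_left hM (by positivity) (one_add_mul_mul_one_add_lt hS hkey)
end

section
/- Let χ > 0 and p < k̄ be positive integers, and define g : {p, p+1, ..., k̄} → ℝ by the backward recursion g(k̄) = χ/(k̄-1) and j·g(j) - g(j+1) = χ for p ≤ j ≤ k̄-1. Then for all j with p ≤ j ≤ k̄-1, j·g(j) - (j+1)·g(j+1) ≥ 0. -/
/-!
Since `j g(j) - (j+1) g(j+1) = χ - j g(j+1)`, it suffices to show `(i - 1) g(i) ≤ χ` (together
with `g(i) ≥ 0`) for `p ≤ i ≤ k̄`. This holds with equality at `i = k̄`, and it propagates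
downwards: at `j` it is equivalent to `g(j+1) ≤ g(j)`, i.e. to `j g(j+1) ≤ χ + g(j+1) = j g(j)`,
which follows from the bound at `j + 1`.
-/

lemma nonneg_and_sub_one_mul_le_of_mul_sub_eq {χ x a b : ℝ} (hx : 0 < x) (hrec : x * a - b = χ)
    (hb : 0 ≤ b) (hxb : x * b ≤ χ) : 0 ≤ a ∧ (x - 1) * a ≤ χ := by
  have hba : b ≤ a := le_of_mul_le_mul_left (by linarith) hx
  have ha : 0 ≤ a := hb.trans hba
  exact ⟨ha, by linarith [sub_one_mul x a]⟩

lemma nonneg_and_sub_one_mul_le_of_backward_recursion {χ : ℝ} {p k : ℕ} {g : ℕ → ℝ}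
    (hp : 0 < p) (hrec : ∀ j, p ≤ j → j < k → (j : ℝ) * g j - g (j + 1) = χ)
    (hgk₀ : 0 ≤ g k) (hgk : ((k : ℝ) - 1) * g k ≤ χ) {i : ℕ} (hpi : p ≤ i) (hik : i ≤ k) :
    0 ≤ g i ∧ ((i : ℝ) - 1) * g i ≤ χ := by
  refine Nat.decreasingInduction' (fun j hjk hij ⟨hg, hbound⟩ => ?_) hik ⟨hgk₀, hgk⟩
  push_cast at hbound
  exact nonneg_and_sub_one_mul_le_of_mul_sub_eq (by exact_mod_cast hp.trans_le (hpi.trans hij))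
    (hrec j (hpi.trans hij) hjk) hg (by linarith)

theorem stmt_8 (χ : ℝ) (hχ : 0 < χ) (p k : ℕ) (hp : 0 < p) (hpk : p < k)
    (g : ℕ → ℝ) (hgk : g k = χ / ((k - 1 : ℕ) : ℝ))
    (hrec : ∀ j : ℕ, p ≤ j → j ≤ k - 1 → (j : ℝ) * g j - g (j + 1) = χ) :
    ∀ j : ℕ, p ≤ j → j ≤ k - 1 →
      0 ≤ (j : ℝ) * g j - ((j + 1 : ℕ) : ℝ) * g (j + 1) := by
  intro j hpj hjk
  have hk : (1 : ℝ) < k := by exact_mod_cast (show 1 < k by omega)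
  have hgk₀ : 0 ≤ g k := by rw [hgk]; positivity
  have hgk_eq : ((k : ℝ) - 1) * g k = χ := by
    rw [hgk, Nat.cast_pred (by omega)]
    field_simp [sub_ne_zero.mpr hk.ne']
  have hrec' : ∀ i, p ≤ i → i < k → (i : ℝ) * g i - g (i + 1) = χ :=
    fun i hpi hik => hrec i hpi (by omega)
  obtain ⟨-, hbound⟩ := nonneg_and_sub_one_mul_le_of_backward_recursion hp hrec' hgk₀
    hgk_eq.le (i := j + 1) (by omega) (by omega)
  push_cast at hbound ⊢
  linarith [hrec j hpj hjk]
end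

section
/- Let χ > 0 and p < k̄ be positive integers, and define g(j) for p ≤ j ≤ k̄ by g(k̄) = χ/(k̄-1) and j·g(j) = χ + g(j+1) for p ≤ j ≤ k̄-1. Then the explicit formula j·g(j) = χ·(1 + Σ_{i=j+1}^{k̄-1} j!/i! + j!/((k̄-1)(k̄-1)!)) holds for all p ≤ j ≤ k̄-1. -/
/-!
Set `F j = factorialTail n j = 1 + ∑_{i=j+1}^{n} j!/i! + j!/(n·n!)`. Splitting off the term
`i = j + 1` and using `j!/i! = ((j+1)!/i!)/(j+1)` gives `F j = 1 + F (j+1)/(j+1)`, which is exactly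
the shape of the recursion `j g(j) = χ + g(j+1)`; a descending induction from `j = n` therefore
shows `j g(j) = χ F j`.
-/

open Finset Nat

section

variable {K : Type*} [Field K] [CharZero K]

def factorialTail (K : Type*) [Field K] (n j : ℕ) : K :=
  1 + ∑ i ∈ Icc (j + 1) n, (j ! : K) / (i ! : K) + (j ! : K) / ((n * n ! : ℕ) : K)

theorem factorialTail_self (n : ℕ) : factorialTail K n n = 1 + 1 / (n : K) := by
  have hfac : (n ! : K) ≠ 0 := by exact_mod_cast n.factorial_ne_zero
  rw [factorialTail, Icc_eq_empty (by omega), sum_empty, Nat.cast_mul, div_mul_cancel_right₀ hfac,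
    one_div, add_zero]

theorem factorialTail_eq_of_lt {n j : ℕ} (hjn : j < n) :
    factorialTail K n j = 1 + factorialTail K n (j + 1) / ((j : K) + 1) := by
  have hj : (j : K) + 1 ≠ 0 := by exact_mod_cast j.succ_ne_zero
  have hfac : ((j + 1) ! : K) ≠ 0 := by exact_mod_cast (j + 1).factorial_ne_zero
  have hratio : ∀ d : K, (j ! : K) / d = ((j + 1) ! : K) / d / ((j : K) + 1) := by
    intro d
    rw [Nat.factorial_succ, Nat.cast_mul, Nat.cast_succ, div_div, mul_comm d, mul_div_mul_left _ _ hj]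
  simp only [factorialTail, Icc_eq_cons_Ioc (show j + 1 ≤ n by omega), sum_cons,
    ← Icc_add_one_left_eq_Ioc, hratio, ← sum_div, add_div, div_self hfac]
  ring

theorem mul_eq_factorialTail_of_recursion (c : K) (p n : ℕ) (g : ℕ → K)
    (hterm : g (n + 1) = c / n)
    (hrec : ∀ j : ℕ, p ≤ j → j ≤ n → (j : K) * g j = c + g (j + 1))
    {j : ℕ} (hpj : p ≤ j) (hjn : j ≤ n) :
    (j : K) * g j = c * factorialTail K n j := by
  induction hjn using Nat.decreasingInduction with
  | self =>
    rw [hrec n hpj le_rfl, hterm, factorialTail_self]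
    ring
  | of_succ j hjn ih =>
    have hj : (j : K) + 1 ≠ 0 := by exact_mod_cast j.succ_ne_zero
    have hnext : g (j + 1) = c * factorialTail K n (j + 1) / ((j : K) + 1) := by
      rw [eq_div_iff hj, ← ih (by omega), Nat.cast_succ, mul_comm]
    rw [hrec j hpj hjn.le, hnext, factorialTail_eq_of_lt hjn]
    ring

end

theorem stmt_9_general (χ : ℝ) (p k : ℕ) (hpk : p < k)
    (g : ℕ → ℝ) (hgk : g k = χ / ((k - 1 : ℕ) : ℝ))
    (hrec : ∀ j : ℕ, p ≤ j → j ≤ k - 1 → (j : ℝ) * g j = χ + g (j + 1)) :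
    ∀ j : ℕ, p ≤ j → j ≤ k - 1 →
      (j : ℝ) * g j =
        χ * (1 + (∑ i ∈ Finset.Icc (j + 1) (k - 1),
            (Nat.factorial j : ℝ) / (Nat.factorial i : ℝ)) +
          (Nat.factorial j : ℝ) / (((k - 1) * Nat.factorial (k - 1) : ℕ) : ℝ)) := by
  intro j hpj hjk
  have hterm : g (k - 1 + 1) = χ / ((k - 1 : ℕ) : ℝ) := by rwa [Nat.sub_add_cancel (by omega)]
  exact mul_eq_factorialTail_of_recursion χ p (k - 1) g hterm hrec hpj hjk

theorem stmt_9 (χ : ℝ) (hχ : 0 < χ) (p k : ℕ) (hp : 0 < p) (hpk : p < k)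
    (g : ℕ → ℝ) (hgk : g k = χ / ((k - 1 : ℕ) : ℝ))
    (hrec : ∀ j : ℕ, p ≤ j → j ≤ k - 1 → (j : ℝ) * g j = χ + g (j + 1)) :
    ∀ j : ℕ, p ≤ j → j ≤ k - 1 →
      (j : ℝ) * g j =
        χ * (1 + (∑ i ∈ Finset.Icc (j + 1) (k - 1),
            (Nat.factorial j : ℝ) / (Nat.factorial i : ℝ)) +
          (Nat.factorial j : ℝ) / (((k - 1) * Nat.factorial (k - 1) : ℕ) : ℝ)) :=
  stmt_9_general χ p k hpk g hgk hrec
end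

section
/- Let 1 < p < k̄ and define f'_p : {1,...,k̄} → ℝ≥0 by f'_p(j) = f*_p(j) for j ≤ p and by the backward recursion j·f'_p(j) - f'_p(j+1) = χ' for p ≤ j ≤ k̄-1 with (k̄-1)·f'_p(k̄) = χ', where χ' = ((k̄-1)(k̄-1)!/(k̄ + (k̄-1)·Σ_{h=1}^{k̄-1-p}(k̄-1)!/(k̄-h-1)!))·f*_p(p)/(p-1)!. Then f'_p is non-increasing on {1,...,k̄}. -/
/-!
On `{1, …, p}` the rule is `f*_p`, whose monotonicity comes from the telescoping bound
`1/(b·b!) + ∑_{i=a+1}^{b} 1/i! ≤ 1/(a·a!)`, i.e. from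
`1/(n·n!) - 1/((n+1)·(n+1)!) ≥ 1/(n+1)!`.

On `{p, …, k̄}` the recursion `j f(j) - f(j+1) = χ'` shows that `f(j+1) ≤ f(j)` is equivalent to
`(j-1) f(j) ≤ χ'`. Going down from `(k̄-1) f(k̄) = χ'`, the invariant `f(j) ≥ 0 ∧ (j-1) f(j) ≤ χ'`
propagates: `(j-1) f(j) = (j-1)(χ' + f(j+1))/j ≤ χ'` because `(j-1) f(j+1) ≤ j f(j+1) ≤ χ'`.
-/

theorem one_div_mul_factorial_add_sum_Icc_le {a b : ℕ} (ha : 1 ≤ a) (hab : a ≤ b) :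
    1 / ((b : ℝ) * b.factorial) + ∑ i ∈ Finset.Icc (a + 1) b, (1 : ℝ) / i.factorial ≤
      1 / ((a : ℝ) * a.factorial) := by
  induction b, hab using Nat.le_induction with
  | base => simp
  | succ b hab ih =>
    rw [Finset.sum_Icc_succ_top (by omega)]
    have hb : (1 : ℝ) ≤ b := by exact_mod_cast ha.trans hab
    have hfac : (0 : ℝ) < b.factorial := by exact_mod_cast b.factorial_pos
    have step : 1 / (((b + 1 : ℕ) : ℝ) * (b + 1).factorial) + 1 / ((b + 1).factorial : ℝ) ≤
        1 / ((b : ℝ) * b.factorial) := by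
      rw [Nat.factorial_succ]
      push_cast
      rw [div_add_div _ _ (by positivity) (by positivity),
        div_le_div_iff₀ (by positivity) (by positivity)]
      nlinarith [mul_pos hfac hfac]
    linarith

theorem factorial_mul_le_pred_factorial_mul {c S : ℝ} {j : ℕ} (hj : 1 ≤ j) (hc : 0 ≤ c) (hS : 0 ≤ S)
    (hcS : c + S ≤ 1 / ((j : ℝ) * j.factorial)) :
    (j.factorial : ℝ) * (c + S) ≤ ((j - 1).factorial : ℝ) * (c + (1 / j.factorial + S)) := by
  have hfac : (j.factorial : ℝ) = j * (j - 1).factorial := by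
    exact_mod_cast (Nat.mul_factorial_pred (by omega : j ≠ 0)).symm
  have hj0 : (0 : ℝ) < j := by exact_mod_cast hj
  have hfac' : (0 : ℝ) < (j - 1).factorial := by exact_mod_cast (j - 1).factorial_pos
  calc (j.factorial : ℝ) * (c + S)
      ≤ j.factorial * (1 / ((j : ℝ) * j.factorial)) := by gcongr
    _ = (j - 1).factorial * (1 / j.factorial) := by rw [hfac]; field_simp
    _ ≤ (j - 1).factorial * (c + (1 / j.factorial + S)) := by gcongr; linarith

theorem fstar_succ_le {p j : ℕ} (hj : 1 ≤ j) (hjp : j < p) : fstar p (j + 1) ≤ fstar p j := by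
  set c : ℝ := 1 / (((p - 1) * (p - 1).factorial : ℕ) : ℝ) with hc
  have hc0 : 0 < c := by
    have : 0 < (p - 1) * (p - 1).factorial := Nat.mul_pos (by omega) (Nat.factorial_pos _)
    positivity
  have hden : 0 < c + ∑ i ∈ Finset.Icc 1 (p - 1), (1 : ℝ) / i.factorial := by
    have : 0 ≤ ∑ i ∈ Finset.Icc 1 (p - 1), (1 : ℝ) / i.factorial :=
      Finset.sum_nonneg fun i _ => by positivity
    linarith
  unfold fstar
  rw [← hc, Nat.add_sub_cancel]
  apply div_le_div_of_nonneg_right _ hden.le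
  rw [Finset.Icc_eq_cons_Ioc (by omega : j ≤ p - 1), Finset.sum_cons,
    ← Finset.Icc_add_one_left_eq_Ioc]
  apply factorial_mul_le_pred_factorial_mul hj hc0.le (Finset.sum_nonneg fun i _ => by positivity)
  have htele := one_div_mul_factorial_add_sum_Icc_le hj (by omega : j ≤ p - 1)
  rw [hc]
  push_cast
  exact htele

theorem chiRisky_nonneg (p k : ℕ) : 0 ≤ chiRisky p k := by
  unfold chiRisky fstar
  positivity

section BackwardRecurrence

variable {f : ℕ → ℝ} {c : ℝ} {m k : ℕ}

theorem backward_recurrence_invariant (hc : 0 ≤ c) (hm : 1 ≤ m)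
    (hrec : ∀ j : ℕ, m ≤ j → j ≤ k - 1 → (j : ℝ) * f j - f (j + 1) = c)
    (htail : ((k - 1 : ℕ) : ℝ) * f k = c) (hmk : m ≤ k - 1) {j : ℕ} (hjk : j ≤ k) :
    m ≤ j → 0 ≤ f j ∧ ((j : ℝ) - 1) * f j ≤ c := by
  induction hjk using Nat.decreasingInduction with
  | self =>
    intro _
    have hk : ((k - 1 : ℕ) : ℝ) = k - 1 := by rw [Nat.cast_sub (by omega), Nat.cast_one]
    have hk1 : (0 : ℝ) < k - 1 := by
      have : (2 : ℝ) ≤ k := by exact_mod_cast (by omega : 2 ≤ k)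
      linarith
    rw [hk] at htail
    refine ⟨?_, htail.le⟩
    by_contra! hneg
    nlinarith
  | of_succ j hjk ih =>
    intro hmj
    obtain ⟨hpos, hbound⟩ := ih (by omega)
    have hstep := hrec j hmj (by omega)
    have hj : (1 : ℝ) ≤ j := by exact_mod_cast hm.trans hmj
    push_cast at hbound
    constructor <;> nlinarith

theorem succ_le_of_backward_recurrence (hc : 0 ≤ c) (hm : 1 ≤ m)
    (hrec : ∀ j : ℕ, m ≤ j → j ≤ k - 1 → (j : ℝ) * f j - f (j + 1) = c)
    (htail : ((k - 1 : ℕ) : ℝ) * f k = c) (hmk : m ≤ k - 1) : f (m + 1) ≤ f m := by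
  have hbound := (backward_recurrence_invariant hc hm hrec htail hmk (by omega) le_rfl).2
  have hstep := hrec m le_rfl hmk
  linarith

end BackwardRecurrence

theorem stmt_14_general (p k : ℕ) (f : ℕ → ℝ)
    (hhead : ∀ j ∈ Finset.Icc 1 p, f j = fstar p j)
    (hrec : ∀ j : ℕ, p ≤ j → j ≤ k - 1 → (j : ℝ) * f j - f (j + 1) = chiRisky p k)
    (htail : ((k - 1 : ℕ) : ℝ) * f k = chiRisky p k) :
    ∀ j : ℕ, 1 ≤ j → j ≤ k - 1 → f (j + 1) ≤ f j := by
  intro j hj hjk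
  rcases lt_or_ge j p with hjp | hpj
  · rw [hhead j (Finset.mem_Icc.mpr ⟨hj, hjp.le⟩),
      hhead (j + 1) (Finset.mem_Icc.mpr ⟨by omega, hjp⟩)]
    exact fstar_succ_le hj hjp
  · exact succ_le_of_backward_recurrence (chiRisky_nonneg p k) hj
      (fun i hji hik => hrec i (hpj.trans hji) hik) htail hjk

theorem stmt_14 (p k : ℕ) (hp : 1 < p) (hpk : p < k) (f : ℕ → ℝ)
    (hhead : ∀ j ∈ Finset.Icc 1 p, f j = fstar p j)
    (hrec : ∀ j : ℕ, p ≤ j → j ≤ k - 1 → (j : ℝ) * f j - f (j + 1) = chiRisky p k)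
    (htail : ((k - 1 : ℕ) : ℝ) * f k = chiRisky p k) :
    ∀ j : ℕ, 1 ≤ j → j ≤ k - 1 → f (j + 1) ≤ f j :=
  stmt_14_general p k f hhead hrec htail
end

section
/- Consider a covering game with player set N = {1,...,n}, resource set R, action sets A_i ⊆ 2^R, values v_r ≥ 0, and utilities u^i(a) = Σ_{r ∈ a_i} v_r·f(|a|_r) for a non-increasing f : {1,...,k} → ℝ≥0 with f(1)=1, where k bounds max_r |a|_r over all allocations. If a_e is a pure Nash equilibrium and a_opt is a welfare-optimal allocation, then (1 + χ(f,k))·W(a_e) ≥ W(a_opt), where W(a) = Σ_{r : |a|_r ≥ 1} v_r and χ(f,k) = max({j·f(j)-f(j+1) : 1 ≤ j ≤ k-1} ∪ {(k-1)·f(k)}). -/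
open Finset

variable {R : Type*} [Fintype R] [DecidableEq R]

/-- Number of players selecting resource `r` in allocation `a`. -/
def coverCount {n : ℕ} (a : Fin n → Finset R) (r : R) : ℕ :=
  (Finset.univ.filter fun i => r ∈ a i).card

/-- Welfare: total value of covered resources. -/
def welfare {n : ℕ} (v : R → ℝ) (a : Fin n → Finset R) : ℝ :=
  ∑ r ∈ Finset.univ.filter (fun r => 1 ≤ coverCount a r), v r

/-- Utility of player `i` under distribution rule `f`. -/
def utility {n : ℕ} (v : R → ℝ) (f : ℕ → ℝ) (a : Fin n → Finset R) (i : Fin n) : ℝ :=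
  ∑ r ∈ a i, v r * f (coverCount a r)

/-- Feasibility of an allocation with respect to action sets `A`. -/
def feasible {n : ℕ} (A : Fin n → Finset (Finset R)) (a : Fin n → Finset R) : Prop :=
  ∀ i, a i ∈ A i

/-- `χ(f,k)`: the maximum of `{j·f(j) - f(j+1) : 1 ≤ j ≤ k-1} ∪ {(k-1)·f(k)}`. -/
noncomputable def chi (f : ℕ → ℝ) (k : ℕ) : ℝ :=
  (Finset.Icc 1 (k - 1)).fold max (((k - 1 : ℕ) : ℝ) * f k)
    (fun j : ℕ => (j : ℝ) * f j - f (j + 1))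

/-!
When player `i` deviates from the equilibrium `ae` to its action `aopt i` in the optimum, on each
resource `r` of that action it receives at least `f (x r + 1)` per unit of value, where `x r` is
the equilibrium load (at least `f (x r)` if it was already there, which is no less by monotonicity).
Summing the Nash conditions over the players gives
`∑ r, y r * v r * f (x r + 1) ≤ ∑ i, u i ae = ∑ r, x r * v r * f (x r)`, `y` the optimal loads.
The bound then follows by summing, over resources, the elementary inequality
`v [1 ≤ y] + x v f x ≤ y v f (x + 1) + (1 + χ) v [1 ≤ x]`, which is exactly what `χ` is built for:
`x f x - f (x + 1) ≤ χ`.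
-/

set_option linter.unusedSectionVars false

section JoinShare

variable {f : ℕ → ℝ} {k j : ℕ}

/-- What a deviating player gets per unit of value from a resource already used by `j` players:
`f (j + 1)` if it joins them. The cap at `k` makes the value `f k` for `j = k`, which only happens
when the deviator was one of the `j` users and keeps getting `f j`. -/
def joinShare (f : ℕ → ℝ) (k j : ℕ) : ℝ :=
  f (min (j + 1) k)

lemma joinShare_of_lt (h : j < k) : joinShare f k j = f (j + 1) := by
  rw [joinShare, min_eq_left h]

lemma joinShare_zero (hf1 : f 1 = 1) (hk : 1 ≤ k) : joinShare f k 0 = 1 := by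
  rw [joinShare, zero_add, min_eq_left hk, hf1]

lemma joinShare_nonneg (hf0 : ∀ j ∈ Finset.Icc 1 k, 0 ≤ f j) (hk : 1 ≤ k) :
    0 ≤ joinShare f k j :=
  hf0 _ (Finset.mem_Icc.mpr ⟨le_min (Nat.le_add_left 1 j) hk, min_le_right _ _⟩)

lemma joinShare_le_of_mem_Icc (hf : AntitoneOn f (Set.Icc 1 k)) (hj : j ∈ Set.Icc 1 k) :
    joinShare f k j ≤ f j :=
  hf hj ⟨hj.1.trans (le_min (Nat.le_succ j) hj.2), min_le_right _ _⟩
    (le_min (Nat.le_succ j) hj.2)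

lemma joinShare_le_one (hf1 : f 1 = 1) (hf : AntitoneOn f (Set.Icc 1 k)) (hk : 1 ≤ k) :
    joinShare f k j ≤ 1 :=
  hf1 ▸ hf ⟨le_rfl, hk⟩ ⟨le_min (Nat.le_add_left 1 j) hk, min_le_right _ _⟩
    (le_min (Nat.le_add_left 1 j) hk)

lemma mul_sub_joinShare_le_chi (hj : j ∈ Set.Icc 1 k) :
    j * f j - joinShare f k j ≤ chi f k := by
  rw [chi, Finset.le_fold_max]
  rcases hj.2.lt_or_eq with hlt | rfl
  · exact Or.inr ⟨j, Finset.mem_Icc.mpr ⟨hj.1, by omega⟩,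
      sub_le_sub_left (joinShare_of_lt hlt).ge _⟩
  · left
    rw [joinShare, min_eq_right (Nat.le_succ j), Nat.cast_sub hj.1, Nat.cast_one, sub_one_mul]

lemma ite_add_mul_le_mul_joinShare_add {v : ℝ} {x y : ℕ} (hv : 0 ≤ v) (hf1 : f 1 = 1)
    (hf0 : ∀ j ∈ Finset.Icc 1 k, 0 ≤ f j) (hf : AntitoneOn f (Set.Icc 1 k))
    (hx : x ≤ k) (hy : y ≤ k) :
    (if 1 ≤ y then v else 0) + x * (v * f x)
      ≤ y * (v * joinShare f k x) + (1 + chi f k) * (if 1 ≤ x then v else 0) := by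
  by_cases hx1 : 1 ≤ x
  · have hk : 1 ≤ k := hx1.trans hx
    have hchi := mul_sub_joinShare_le_chi (f := f) ⟨hx1, hx⟩
    have hg0 := joinShare_nonneg (j := x) hf0 hk
    rw [if_pos hx1]
    split_ifs with hy1
    · have hy1' : (1 : ℝ) ≤ y := by exact_mod_cast hy1
      nlinarith [mul_nonneg hv hg0]
    · obtain rfl : y = 0 := by omega
      have hg1 := joinShare_le_one (j := x) hf1 hf hk
      simp only [Nat.cast_zero, zero_mul, zero_add]
      nlinarith
  · obtain rfl : x = 0 := by omega
    split_ifs with hy1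
    · have hy1' : (1 : ℝ) ≤ y := by exact_mod_cast hy1
      rw [joinShare_zero hf1 (hy1.trans hy)]
      simp only [Nat.cast_zero, zero_mul, mul_zero, add_zero, mul_one]
      nlinarith
    · obtain rfl : y = 0 := by omega
      simp

end JoinShare

section Coverage

variable {n : ℕ}

lemma one_le_coverCount {a : Fin n → Finset R} {i : Fin n} {r : R} (h : r ∈ a i) :
    1 ≤ coverCount a r :=
  Finset.card_pos.mpr ⟨i, Finset.mem_filter.mpr ⟨Finset.mem_univ i, h⟩⟩

lemma coverCount_update_of_mem (a : Fin n → Finset R) (i : Fin n) {b : Finset R} {r : R}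
    (hr : r ∈ b) :
    coverCount (Function.update a i b) r
      = if r ∈ a i then coverCount a r else coverCount a r + 1 := by
  have hfilter : Finset.univ.filter (fun j => r ∈ Function.update a i b j)
      = insert i (Finset.univ.filter fun j => r ∈ a j) := by
    ext j
    rcases eq_or_ne j i with rfl | hj
    · simp [hr]
    · simp [hj]
  rw [coverCount, hfilter, Finset.card_insert_eq_ite]
  simp [coverCount]

lemma sum_sum_eq_sum_coverCount_nsmul {M : Type*} [AddCommMonoid M] (a : Fin n → Finset R)
    (t : R → M) :
    ∑ i, ∑ r ∈ a i, t r = ∑ r, coverCount a r • t r := by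
  rw [Finset.sum_comm' (t' := Finset.univ) (s' := fun r => Finset.univ.filter fun i => r ∈ a i)
    (by simp)]
  simp only [Finset.sum_const]
  rfl

lemma sum_utility (v : R → ℝ) (f : ℕ → ℝ) (a : Fin n → Finset R) :
    ∑ i, utility v f a i = ∑ r, (coverCount a r : ℝ) * (v r * f (coverCount a r)) := by
  simp only [utility, sum_sum_eq_sum_coverCount_nsmul, nsmul_eq_mul]

lemma welfare_eq_sum_ite (v : R → ℝ) (a : Fin n → Finset R) :
    welfare v a = ∑ r, if 1 ≤ coverCount a r then v r else 0 :=
  Finset.sum_filter _ _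

lemma feasible_update {A : Fin n → Finset (Finset R)} {a : Fin n → Finset R} (ha : feasible A a)
    {i : Fin n} {b : Finset R} (hb : b ∈ A i) : feasible A (Function.update a i b) := by
  intro j
  rcases eq_or_ne j i with rfl | hj
  · simpa using hb
  · simpa [hj] using ha j

lemma sum_joinShare_le_utility_update {v : R → ℝ} {f : ℕ → ℝ} {k : ℕ} (hv : ∀ r, 0 ≤ v r)
    (hf : AntitoneOn f (Set.Icc 1 k)) (a : Fin n → Finset R) (i : Fin n) (b : Finset R)
    (hk : ∀ r, coverCount (Function.update a i b) r ≤ k) :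
    ∑ r ∈ b, v r * joinShare f k (coverCount a r) ≤ utility v f (Function.update a i b) i := by
  rw [utility, Function.update_self]
  refine Finset.sum_le_sum fun r hr => mul_le_mul_of_nonneg_left ?_ (hv r)
  have hkr := hk r
  rw [coverCount_update_of_mem a i hr] at hkr ⊢
  split_ifs at hkr ⊢ with hri
  · exact joinShare_le_of_mem_Icc hf ⟨one_le_coverCount hri, hkr⟩
  · exact (joinShare_of_lt hkr).le

end Coverage

theorem stmt_16_general {n : ℕ} (A : Fin n → Finset (Finset R)) (v : R → ℝ)
    (hv : ∀ r, 0 ≤ v r) (k : ℕ) (f : ℕ → ℝ)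
    (hnonneg : ∀ j ∈ Finset.Icc 1 k, 0 ≤ f j) (hone : f 1 = 1)
    (hmono : ∀ j : ℕ, 1 ≤ j → j ≤ k - 1 → f (j + 1) ≤ f j)
    (hcard : ∀ a : Fin n → Finset R, feasible A a → ∀ r, coverCount a r ≤ k)
    (ae : Fin n → Finset R) (hae : feasible A ae)
    (heq : ∀ i : Fin n, ∀ b ∈ A i,
      utility v f (Function.update ae i b) i ≤ utility v f ae i)
    (aopt : Fin n → Finset R) (hopt : feasible A aopt) :
    welfare v aopt ≤ (1 + chi f k) * welfare v ae := by
  have hf : AntitoneOn f (Set.Icc 1 k) :=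
    antitoneOn_of_add_one_le Set.ordConnected_Icc fun j _ hj hj1 =>
      hmono j hj.1 (Nat.le_sub_one_of_lt hj1.2)
  have hnash : ∑ r, (coverCount aopt r : ℝ) * (v r * joinShare f k (coverCount ae r))
      ≤ ∑ r, (coverCount ae r : ℝ) * (v r * f (coverCount ae r)) := by
    rw [← sum_utility]
    simp only [← nsmul_eq_mul, ← sum_sum_eq_sum_coverCount_nsmul]
    exact Finset.sum_le_sum fun i _ =>
      (sum_joinShare_le_utility_update hv hf ae i (aopt i)
        (hcard _ (feasible_update hae (hopt i)))).trans (heq i _ (hopt i))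
  have hlocal := Finset.sum_le_sum fun r (_ : r ∈ Finset.univ) =>
    ite_add_mul_le_mul_joinShare_add (hv r) hone hnonneg hf (hcard ae hae r) (hcard aopt hopt r)
  rw [Finset.sum_add_distrib, Finset.sum_add_distrib, ← Finset.mul_sum,
    ← welfare_eq_sum_ite, ← welfare_eq_sum_ite] at hlocal
  linarith

theorem stmt_16 {n : ℕ} (A : Fin n → Finset (Finset R)) (v : R → ℝ)
    (hv : ∀ r, 0 ≤ v r) (k : ℕ) (hk : 2 ≤ k) (f : ℕ → ℝ)
    (hnonneg : ∀ j ∈ Finset.Icc 1 k, 0 ≤ f j) (hone : f 1 = 1)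
    (hmono : ∀ j : ℕ, 1 ≤ j → j ≤ k - 1 → f (j + 1) ≤ f j)
    (hcard : ∀ a : Fin n → Finset R, feasible A a → ∀ r, coverCount a r ≤ k)
    (ae : Fin n → Finset R) (hae : feasible A ae)
    (heq : ∀ i : Fin n, ∀ b ∈ A i,
      utility v f (Function.update ae i b) i ≤ utility v f ae i)
    (aopt : Fin n → Finset R) (hopt : feasible A aopt)
    (hbest : ∀ a : Fin n → Finset R, feasible A a → welfare v a ≤ welfare v aopt) :
    welfare v aopt ≤ (1 + chi f k) * welfare v ae :=
  stmt_16_general A v hv k f hnonneg hone hmono hcard ae hae heq aopt hopt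
end
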